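/- There exists a constant C > 0 such that for every t ∈ ℝ and every φ : ℤ_{≥1} → ℂ with Σ_{k≥1} |φ(k)| < ∞, the solution of the discrete Schrödinger equation on the positive integers with Dirichlet boundary condition at j = 0, given by u(t,j) := Σ_{k≥1} (K_t(j-k) - K_t(j+k)) φ(k) for j ≥ 1, satisfies sup_{j≥1} |u(t,j)| ≤ C (1+|t|)^{-1/3} Σ_{k≥1} |φ(k)|. -/

import Mathlib

/-!
The kernel is the oscillatory integral `(2π)⁻¹ ∫_{-π}^{π} e^{iψ(ξ)} dξ` with phase
`ψ(ξ) = jξ - 2t(1 - cos ξ)`, whose second derivative `-2t cos ξ` is at least `2|t|δ` in absolute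
value outside two windows of width `πδ` around `±π/2`. Van der Corput's second-derivative lemma
bounds the integral over the remaining three arcs by `O((|t|δ)^{-1/2})`, the windows contribute
`O(δ)`, and `δ ≈ |t|^{-1/3}` balances the two, uniformly in `j`. The Dirichlet solution is an
`ℓ¹`-combination of differences of two kernel values, so it inherits the bound.
-/

open Real MeasureTheory

/-- The discrete Schrödinger kernel
`K t j = (1/(2π)) ∫_{-π}^{π} e^{-4 i t sin²(ξ/2)} e^{i j ξ} dξ`. -/
noncomputable def schrodingerKernel (t : ℝ) (j : ℤ) : ℂ :=
  (1 / (2 * Real.pi)) * ∫ ξ in (-Real.pi)..Real.pi,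
    Complex.exp (-4 * Complex.I * (t : ℂ) * ((Real.sin (ξ / 2) : ℂ)) ^ 2) *
      Complex.exp (Complex.I * (j : ℂ) * (ξ : ℂ))

open Set

theorem IsPreconnected.forall_le_or_forall_le_neg {X : Type*} [TopologicalSpace X] {s : Set X}
    {f : X → ℝ} {μ : ℝ} (hs : IsPreconnected s) (hf : ContinuousOn f s) (hμ : 0 < μ)
    (hfμ : ∀ x ∈ s, μ ≤ |f x|) : (∀ x ∈ s, μ ≤ f x) ∨ ∀ x ∈ s, f x ≤ -μ := by
  by_contra! ⟨⟨x, hx, hfx⟩, y, hy, hfy⟩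
  have hfx' : f x ≤ -μ := by
    rcases le_abs'.1 (hfμ x hx) with h | h <;> linarith
  have hfy' : μ ≤ f y := by
    rcases le_abs'.1 (hfμ y hy) with h | h <;> linarith
  obtain ⟨z, hz, hfz⟩ := hs.intermediate_value hx hy hf
    (show (0 : ℝ) ∈ Icc (f x) (f y) from ⟨by linarith, by linarith⟩)
  have hfz' := hfμ z hz
  rw [hfz, abs_zero] at hfz'
  linarith

theorem norm_integral_exp_mul_I_le (ψ : ℝ → ℝ) (a b : ℝ) :
    ‖∫ x in a..b, Complex.exp (ψ x * Complex.I)‖ ≤ |b - a| := by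
  simpa using intervalIntegral.norm_integral_le_of_norm_le_const (a := a) (b := b)
    (f := fun x => Complex.exp (ψ x * Complex.I)) (C := 1)
    fun x _ => (Complex.norm_exp_ofReal_mul_I (ψ x)).le

theorem norm_integral_exp_neg_mul_I (ψ : ℝ → ℝ) (a b : ℝ) :
    ‖∫ x in a..b, Complex.exp (↑(-ψ x) * Complex.I)‖ =
      ‖∫ x in a..b, Complex.exp (ψ x * Complex.I)‖ := by
  have hconj (x : ℝ) : Complex.exp (↑(-ψ x) * Complex.I) =
      starRingEnd ℂ (Complex.exp (ψ x * Complex.I)) := by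
    rw [← Complex.exp_conj, map_mul, Complex.conj_ofReal, Complex.conj_I]
    push_cast; ring_nf
  simp_rw [hconj, intervalIntegral.intervalIntegral_conj, RCLike.norm_conj]

theorem norm_intervalIntegral_le_add {E : Type*} [NormedAddCommGroup E] [NormedSpace ℝ E]
    {f : ℝ → E} {a b c : ℝ} (hab : IntervalIntegrable f volume a b)
    (hbc : IntervalIntegrable f volume b c) :
    ‖∫ x in a..c, f x‖ ≤ ‖∫ x in a..b, f x‖ + ‖∫ x in b..c, f x‖ := by
  rw [← intervalIntegral.integral_add_adjacent_intervals hab hbc]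
  exact norm_add_le _ _

theorem integral_abs_deriv_le {g g' : ℝ → ℝ} {a b C : ℝ} (hab : a ≤ b)
    (hg : ∀ x ∈ Icc a b, HasDerivAt g (g' x) x) (hg' : ContinuousOn g' (Icc a b))
    (hsign : (∀ x ∈ Icc a b, 0 ≤ g' x) ∨ ∀ x ∈ Icc a b, g' x ≤ 0)
    (hgC : ∀ x ∈ Icc a b, g x ∈ Icc 0 C) :
    ∫ x in a..b, |g' x| ≤ C := by
  rw [← uIcc_of_le hab] at hg hg' hsign hgC
  have hftc : ∫ x in a..b, g' x = g b - g a :=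
    intervalIntegral.integral_eq_sub_of_hasDerivAt hg (hg'.intervalIntegrable)
  have ha := hgC a left_mem_uIcc
  have hb := hgC b right_mem_uIcc
  rcases hsign with hnonneg | hnonpos
  · rw [intervalIntegral.integral_congr fun x hx => abs_of_nonneg (hnonneg x hx), hftc]
    linarith [ha.1, hb.2]
  · rw [intervalIntegral.integral_congr fun x hx => abs_of_nonpos (hnonpos x hx),
      intervalIntegral.integral_neg, hftc]
    linarith [ha.2, hb.1]

theorem integral_abs_deriv_inv_le {ψ' ψ'' : ℝ → ℝ} {a b ρ : ℝ} (hab : a ≤ b) (hρ : 0 < ρ)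
    (hψ' : ∀ x ∈ Icc a b, HasDerivAt ψ' (ψ'' x) x) (hψ'' : ContinuousOn ψ'' (Icc a b))
    (hsign : (∀ x ∈ Icc a b, 0 ≤ ψ'' x) ∨ ∀ x ∈ Icc a b, ψ'' x ≤ 0)
    (hρψ' : ∀ x ∈ Icc a b, ρ ≤ ψ' x) :
    ∫ x in a..b, |-ψ'' x / ψ' x ^ 2| ≤ ρ⁻¹ := by
  have hψ'pos (x) (hx : x ∈ Icc a b) : 0 < ψ' x := hρ.trans_le (hρψ' x hx)
  have hψ'cont : ContinuousOn ψ' (Icc a b) := fun x hx =>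
    (hψ' x hx).continuousAt.continuousWithinAt
  refine integral_abs_deriv_le (g := fun x => (ψ' x)⁻¹) hab
    (fun x hx => (hψ' x hx).inv (hψ'pos x hx).ne')
    (hψ''.neg.div (hψ'cont.pow 2) fun x hx => pow_ne_zero 2 (hψ'pos x hx).ne') ?_
    fun x hx => ⟨(inv_pos.2 (hψ'pos x hx)).le, inv_anti₀ hρ (hρψ' x hx)⟩
  rcases hsign with h | h
  · exact Or.inr fun x hx => div_nonpos_of_nonpos_of_nonneg (neg_nonpos.2 (h x hx)) (sq_nonneg _)
  · exact Or.inl fun x hx => div_nonneg (neg_nonneg.2 (h x hx)) (sq_nonneg _)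

theorem norm_integral_exp_mul_I_le_of_le_deriv {ψ ψ' ψ'' : ℝ → ℝ} {a b ρ : ℝ} (hab : a ≤ b)
    (hρ : 0 < ρ) (hψ : ∀ x ∈ Icc a b, HasDerivAt ψ (ψ' x) x)
    (hψ' : ∀ x ∈ Icc a b, HasDerivAt ψ' (ψ'' x) x) (hψ'' : ContinuousOn ψ'' (Icc a b))
    (hsign : (∀ x ∈ Icc a b, 0 ≤ ψ'' x) ∨ ∀ x ∈ Icc a b, ψ'' x ≤ 0)
    (hρψ' : ∀ x ∈ Icc a b, ρ ≤ ψ' x) :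
    ‖∫ x in a..b, Complex.exp (ψ x * Complex.I)‖ ≤ 3 / ρ := by
  rw [← uIcc_of_le hab] at hψ hψ' hψ''
  have hψ'pos (x) (hx : x ∈ uIcc a b) : 0 < ψ' x := hρ.trans_le (hρψ' x (uIcc_of_le hab ▸ hx))
  have hψcont : ContinuousOn ψ (uIcc a b) := fun x hx => (hψ x hx).continuousAt.continuousWithinAt
  have hψ'cont : ContinuousOn ψ' (uIcc a b) := fun x hx =>
    (hψ' x hx).continuousAt.continuousWithinAt
  -- Integrate by parts `e^{iψ} = u v'` with `u = -i / ψ'` and `v = e^{iψ}`.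
  set e : ℝ → ℂ := fun x => Complex.exp (ψ x * Complex.I)
  set u : ℝ → ℂ := fun x => -Complex.I * ((ψ' x)⁻¹ : ℝ)
  set u' : ℝ → ℂ := fun x => -Complex.I * ((-ψ'' x / ψ' x ^ 2 : ℝ) : ℂ)
  have hu (x) (hx : x ∈ uIcc a b) : HasDerivAt u (u' x) x :=
    (((hψ' x hx).inv (hψ'pos x hx).ne').ofReal_comp).const_mul _
  have he (x) (hx : x ∈ uIcc a b) : HasDerivAt e (ψ' x * Complex.I * e x) x := by
    simpa [e, mul_comm] using ((hψ x hx).ofReal_comp.mul_const Complex.I).cexp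
  have hu' : IntervalIntegrable u' volume a b := by
    have h : ContinuousOn (fun x => -ψ'' x / ψ' x ^ 2) (uIcc a b) :=
      hψ''.neg.div (hψ'cont.pow 2) fun x hx => pow_ne_zero 2 (hψ'pos x hx).ne'
    exact ContinuousOn.intervalIntegrable (by fun_prop)
  have he' : IntervalIntegrable (fun x => ψ' x * Complex.I * e x) volume a b :=
    ContinuousOn.intervalIntegrable (by fun_prop)
  have hibp := intervalIntegral.integral_mul_deriv_eq_deriv_mul hu he hu' he'
  have hue (x) (hx : x ∈ uIcc a b) : u x * (ψ' x * Complex.I * e x) = e x := by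
    have h0 : (ψ' x : ℂ) ≠ 0 := Complex.ofReal_ne_zero.2 (hψ'pos x hx).ne'
    simp only [u, Complex.ofReal_inv]
    field_simp
    rw [Complex.I_sq]
    ring
  rw [intervalIntegral.integral_congr hue] at hibp
  have hnorm (x y : ℝ) : ‖(-Complex.I * (y : ℂ)) * e x‖ = |y| := by
    simp [e, Complex.norm_exp_ofReal_mul_I]
  have hend (x) (hx : x ∈ Icc a b) : ‖u x * e x‖ ≤ ρ⁻¹ := by
    rw [hnorm, abs_inv, abs_of_pos (hρ.trans_le (hρψ' x hx))]
    exact inv_anti₀ hρ (hρψ' x hx)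
  have hrem : ‖∫ x in a..b, u' x * e x‖ ≤ ρ⁻¹ := by
    refine (intervalIntegral.norm_integral_le_integral_norm hab).trans ?_
    simpa only [u', hnorm] using integral_abs_deriv_inv_le hab hρ
      (uIcc_of_le hab ▸ hψ') (uIcc_of_le hab ▸ hψ'') hsign hρψ'
  calc ‖∫ x in a..b, e x‖ ≤ ‖u b * e b‖ + ‖u a * e a‖ + ‖∫ x in a..b, u' x * e x‖ := by
        rw [hibp]
        exact norm_sub_le_of_le (norm_sub_le _ _) le_rfl
    _ ≤ ρ⁻¹ + ρ⁻¹ + ρ⁻¹ :=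
        add_le_add (add_le_add (hend b ⟨hab, le_rfl⟩) (hend a ⟨le_rfl, hab⟩)) hrem
    _ = 3 / ρ := by ring

theorem norm_integral_exp_mul_I_le_of_le_abs_deriv {ψ ψ' ψ'' : ℝ → ℝ} {a b ρ : ℝ} (hab : a ≤ b)
    (hρ : 0 < ρ) (hψ : ∀ x ∈ Icc a b, HasDerivAt ψ (ψ' x) x)
    (hψ' : ∀ x ∈ Icc a b, HasDerivAt ψ' (ψ'' x) x) (hψ'' : ContinuousOn ψ'' (Icc a b))
    (hsign : (∀ x ∈ Icc a b, 0 ≤ ψ'' x) ∨ ∀ x ∈ Icc a b, ψ'' x ≤ 0)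
    (hρψ' : ∀ x ∈ Icc a b, ρ ≤ |ψ' x|) :
    ‖∫ x in a..b, Complex.exp (ψ x * Complex.I)‖ ≤ 3 / ρ := by
  have hψ'cont : ContinuousOn ψ' (Icc a b) := fun x hx =>
    (hψ' x hx).continuousAt.continuousWithinAt
  rcases isPreconnected_Icc.forall_le_or_forall_le_neg hψ'cont hρ hρψ' with hpos | hneg
  · exact norm_integral_exp_mul_I_le_of_le_deriv hab hρ hψ hψ' hψ'' hsign hpos
  · rw [← norm_integral_exp_neg_mul_I]
    refine norm_integral_exp_mul_I_le_of_le_deriv (ψ' := -ψ') (ψ'' := -ψ'') hab hρ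
      (fun x hx => (hψ x hx).neg) (fun x hx => (hψ' x hx).neg) hψ''.neg ?_
      fun x hx => le_neg.2 (hneg x hx)
    rcases hsign with h | h
    · exact Or.inr fun x hx => neg_nonpos.2 (h x hx)
    · exact Or.inl fun x hx => neg_nonneg.2 (h x hx)

theorem MonotoneOn.exists_forall_le_forall_ge {f : ℝ → ℝ} {a b : ℝ} (hf : MonotoneOn f (Icc a b))
    (hcont : ContinuousOn f (Icc a b)) (hab : a ≤ b) (c : ℝ) :
    ∃ u ∈ Icc a b, (a < u → ∀ x ∈ Icc a u, f x ≤ c) ∧ (u < b → ∀ x ∈ Icc u b, c ≤ f x) := by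
  by_cases ha : c ≤ f a
  · exact ⟨a, left_mem_Icc.2 hab, fun h => absurd h (lt_irrefl a),
      fun _ x hx => ha.trans (hf (left_mem_Icc.2 hab) hx hx.1)⟩
  by_cases hb : f b ≤ c
  · exact ⟨b, right_mem_Icc.2 hab, fun _ x hx => (hf hx (right_mem_Icc.2 hab) hx.2).trans hb,
      fun h => absurd h (lt_irrefl b)⟩
  obtain ⟨u, hu, hfu⟩ := intermediate_value_Icc hab hcont ⟨(not_le.1 ha).le, (not_le.1 hb).le⟩
  exact ⟨u, hu, fun _ x hx => hfu ▸ hf ⟨hx.1, hx.2.trans hu.2⟩ hu hx.2,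
    fun _ x hx => hfu ▸ hf hu ⟨hu.1.trans hx.1, hx.2⟩ hx.1⟩

theorem exists_split_le_abs_of_mul_sub_le {f : ℝ → ℝ} {a b ρ μ : ℝ} (hab : a ≤ b) (hρ : 0 < ρ)
    (hμ : 0 < μ) (hf : ContinuousOn f (Icc a b))
    (hgrowth : ∀ x ∈ Icc a b, ∀ y ∈ Icc a b, x ≤ y → μ * (y - x) ≤ f y - f x) :
    ∃ u v, a ≤ u ∧ u ≤ v ∧ v ≤ b ∧ v - u ≤ 2 * ρ / μ ∧
      (a < u → ∀ x ∈ Icc a u, ρ ≤ |f x|) ∧ (v < b → ∀ x ∈ Icc v b, ρ ≤ |f x|) := by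
  have hmono : MonotoneOn f (Icc a b) := fun x hx y hy hxy => by
    nlinarith [hgrowth x hx y hy hxy, mul_nonneg hμ.le (sub_nonneg.2 hxy)]
  obtain ⟨u, hu, hleft, hu_ge⟩ := hmono.exists_forall_le_forall_ge hf hab (-ρ)
  obtain ⟨v, hv, hv_le, hright⟩ := hmono.exists_forall_le_forall_ge hf hab ρ
  have huv : u ≤ v := by
    by_contra! hvu
    linarith [hleft (hv.1.trans_lt hvu) v ⟨hv.1, hvu.le⟩,
      hright (hvu.trans_le hu.2) v ⟨le_rfl, hv.2⟩]
  refine ⟨u, v, hu.1, huv, hv.2, ?_, fun h x hx => le_abs'.2 (Or.inl (hleft h x hx)),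
    fun h x hx => le_abs'.2 (Or.inr (hright h x hx))⟩
  rw [le_div_iff₀ hμ]
  rcases huv.eq_or_lt with h | h
  · rw [h, sub_self, zero_mul]; positivity
  · linarith [hgrowth u hu v hv huv, hu_ge (h.trans_le hv.2) u ⟨le_rfl, hu.2⟩,
      hv_le (hu.1.trans_lt h) v ⟨hv.1, le_rfl⟩]

theorem norm_integral_exp_mul_I_le_of_le_deriv2 {ψ ψ' ψ'' : ℝ → ℝ} {a b μ : ℝ} (hab : a ≤ b)
    (hμ : 0 < μ) (hψ : ∀ x ∈ Icc a b, HasDerivAt ψ (ψ' x) x)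
    (hψ' : ∀ x ∈ Icc a b, HasDerivAt ψ' (ψ'' x) x) (hψ'' : ContinuousOn ψ'' (Icc a b))
    (hμψ'' : ∀ x ∈ Icc a b, μ ≤ ψ'' x) :
    ‖∫ x in a..b, Complex.exp (ψ x * Complex.I)‖ ≤ 8 / √μ := by
  set ρ := √μ
  have hρ : 0 < ρ := sqrt_pos.2 hμ
  have hψcont : ContinuousOn ψ (Icc a b) := fun x hx => (hψ x hx).continuousAt.continuousWithinAt
  have hψ'cont : ContinuousOn ψ' (Icc a b) := fun x hx =>
    (hψ' x hx).continuousAt.continuousWithinAt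
  have hgrowth : ∀ x ∈ Icc a b, ∀ y ∈ Icc a b, x ≤ y → μ * (y - x) ≤ ψ' y - ψ' x :=
    (convex_Icc a b).mul_sub_le_image_sub_of_le_deriv hψ'cont
      (fun x hx => (hψ' x (interior_subset hx)).differentiableAt.differentiableWithinAt)
      fun x hx => (hψ' x (interior_subset hx)).deriv ▸ hμψ'' x (interior_subset hx)
  -- On `[a, u]` and `[v, b]` the first-derivative bound applies; `[u, v]` is estimated trivially.
  obtain ⟨u, v, hau, huv, hvb, hlen, hleft, hright⟩ :=
    exists_split_le_abs_of_mul_sub_le hab hρ hμ hψ'cont hgrowth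
  have hlen' : |v - u| ≤ 2 / ρ := by
    have hμρ : μ = ρ ^ 2 := (sq_sqrt hμ.le).symm
    rwa [abs_of_nonneg (sub_nonneg.2 huv), show 2 / ρ = 2 * ρ / μ by rw [hμρ]; field_simp]
  set e : ℝ → ℂ := fun x => Complex.exp (ψ x * Complex.I)
  have hpiece (c d : ℝ) (hc : a ≤ c) (hd : d ≤ b) (hcd : c ≤ d)
      (hρψ' : c < d → ∀ x ∈ Icc c d, ρ ≤ |ψ' x|) : ‖∫ x in c..d, e x‖ ≤ 3 / ρ := by
    rcases hcd.eq_or_lt with h | h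
    · rw [h, intervalIntegral.integral_same, norm_zero]; positivity
    have hsub : Icc c d ⊆ Icc a b := Icc_subset_Icc hc hd
    exact norm_integral_exp_mul_I_le_of_le_abs_deriv hcd hρ (fun x hx => hψ x (hsub hx))
      (fun x hx => hψ' x (hsub hx)) (hψ''.mono hsub)
      (Or.inl fun x hx => hμ.le.trans (hμψ'' x (hsub hx))) (hρψ' h)
  have hint {c d : ℝ} (hc : c ∈ Icc a b) (hd : d ∈ Icc a b) : IntervalIntegrable e volume c d :=
    (ContinuousOn.intervalIntegrable_of_Icc hab (by fun_prop)).mono_set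
      (uIcc_of_le hab ▸ uIcc_subset_Icc hc hd)
  have hu : u ∈ Icc a b := ⟨hau, huv.trans hvb⟩
  have hv : v ∈ Icc a b := ⟨hau.trans huv, hvb⟩
  show ‖∫ x in a..b, e x‖ ≤ 8 / ρ
  linarith [show 8 / ρ = 3 / ρ + 2 / ρ + 3 / ρ by ring,
    norm_intervalIntegral_le_add (hint (left_mem_Icc.2 hab) hu) (hint hu (right_mem_Icc.2 hab)),
    norm_intervalIntegral_le_add (hint hu hv) (hint hv (right_mem_Icc.2 hab)),
    hpiece a u le_rfl (huv.trans hvb) hau hleft, hpiece v b (hau.trans huv) le_rfl hvb hright,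
    (norm_integral_exp_mul_I_le ψ u v).trans hlen']

theorem norm_integral_exp_mul_I_le_of_le_abs_deriv2 {ψ ψ' ψ'' : ℝ → ℝ} {a b μ : ℝ} (hab : a ≤ b)
    (hμ : 0 < μ) (hψ : ∀ x ∈ Icc a b, HasDerivAt ψ (ψ' x) x)
    (hψ' : ∀ x ∈ Icc a b, HasDerivAt ψ' (ψ'' x) x) (hψ'' : ContinuousOn ψ'' (Icc a b))
    (hμψ'' : ∀ x ∈ Icc a b, μ ≤ |ψ'' x|) :
    ‖∫ x in a..b, Complex.exp (ψ x * Complex.I)‖ ≤ 8 / √μ := by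
  rcases isPreconnected_Icc.forall_le_or_forall_le_neg hψ'' hμ hμψ'' with hpos | hneg
  · exact norm_integral_exp_mul_I_le_of_le_deriv2 hab hμ hψ hψ' hψ'' hpos
  · rw [← norm_integral_exp_neg_mul_I]
    exact norm_integral_exp_mul_I_le_of_le_deriv2 (ψ' := -ψ') (ψ'' := -ψ'') hab hμ
      (fun x hx => (hψ x hx).neg) (fun x hx => (hψ' x hx).neg) hψ''.neg
      fun x hx => le_neg.2 (hneg x hx)

theorem le_abs_cos_of_le_abs_sub_pi_div_two {δ x : ℝ} (hδ : 0 ≤ δ) (hδ₁ : δ ≤ 1) (hx : |x| ≤ π)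
    (h₁ : π / 2 * δ ≤ |x - π / 2|) (h₂ : π / 2 * δ ≤ |x + π / 2|) : δ ≤ |cos x| := by
  have hπ := pi_pos
  have hwx : π / 2 * δ ≤ |(π / 2 - |x|)| := by
    rcases abs_cases x with ⟨h, -⟩ | ⟨h, -⟩ <;> rw [h]
    · rwa [abs_sub_comm]
    · rwa [sub_neg_eq_add, add_comm]
  have hle : |(π / 2 - |x|)| ≤ π / 2 := abs_le.2 ⟨by linarith, by linarith [abs_nonneg x]⟩
  rw [← cos_abs, ← sin_pi_div_two_sub, abs_sin_eq_sin_abs_of_abs_le_pi (by linarith)]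
  -- Jordan's inequality `2 w / π ≤ sin w` on `[0, π/2]`.
  calc δ = 2 / π * (π / 2 * δ) := by field_simp
    _ ≤ sin (π / 2 * δ) := mul_le_sin (by positivity) (mul_le_of_le_one_right (by positivity) hδ₁)
    _ ≤ sin |(π / 2 - |x|)| :=
        sin_le_sin_of_le_of_le_pi_div_two (by nlinarith) hle hwx

/-- Since `4 sin²(ξ/2) = 2 (1 - cos ξ)`, the integrand of `schrodingerKernel t j` is
`e^{i ψ(ξ)}` for this phase `ψ`. -/
noncomputable def schrodingerPhase (t : ℝ) (j : ℤ) (ξ : ℝ) : ℝ :=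
  j * ξ - 2 * t * (1 - cos ξ)

theorem hasDerivAt_schrodingerPhase (t : ℝ) (j : ℤ) (ξ : ℝ) :
    HasDerivAt (schrodingerPhase t j) (j - 2 * t * sin ξ) ξ := by
  have h : HasDerivAt (schrodingerPhase t j) (j * 1 - 2 * t * (0 - -sin ξ)) ξ :=
    ((hasDerivAt_id' ξ).const_mul _).sub
      (((hasDerivAt_const ξ 1).sub (hasDerivAt_cos ξ)).const_mul _)
  exact h.congr_deriv (by ring)

theorem hasDerivAt_sub_mul_sin (t c ξ : ℝ) :
    HasDerivAt (fun ξ => c - 2 * t * sin ξ) (-(2 * t * cos ξ)) ξ :=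
  ((hasDerivAt_sin ξ).const_mul (2 * t)).const_sub c

theorem norm_schrodingerKernel (t : ℝ) (j : ℤ) :
    ‖schrodingerKernel t j‖ =
      (2 * π)⁻¹ * ‖∫ ξ in (-π)..π, Complex.exp (schrodingerPhase t j ξ * Complex.I)‖ := by
  have hphase (ξ : ℝ) : Complex.exp (-4 * Complex.I * t * (sin (ξ / 2) : ℂ) ^ 2) *
      Complex.exp (Complex.I * j * ξ) = Complex.exp (schrodingerPhase t j ξ * Complex.I) := by
    have h : (sin (ξ / 2) : ℂ) ^ 2 = ((1 - cos ξ) / 2 : ℝ) := by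
      have hcos := cos_two_mul' (ξ / 2)
      rw [mul_div_cancel₀ _ two_ne_zero] at hcos
      rw [← Complex.ofReal_pow]
      congr 1
      nlinarith [sin_sq_add_cos_sq (ξ / 2)]
    rw [← Complex.exp_add, h, schrodingerPhase]
    push_cast
    ring_nf
  simp only [schrodingerKernel, hphase, norm_mul]
  simp [abs_of_pos pi_pos]

theorem norm_schrodingerKernel_le_one (t : ℝ) (j : ℤ) : ‖schrodingerKernel t j‖ ≤ 1 := by
  rw [norm_schrodingerKernel]
  calc (2 * π)⁻¹ * ‖∫ ξ in (-π)..π, Complex.exp (schrodingerPhase t j ξ * Complex.I)‖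
      ≤ (2 * π)⁻¹ * |π - -π| := by gcongr; exact norm_integral_exp_mul_I_le _ _ _
    _ = 1 := by rw [abs_of_pos (by linarith [pi_pos])]; field_simp; ring

theorem norm_integral_exp_schrodingerPhase_le {t δ a b : ℝ} (j : ℤ) (hab : a ≤ b) (hδ : 0 < δ)
    (htδ : 1 ≤ 2 * |t| * δ ^ 3) (hcos : ∀ x ∈ Icc a b, δ ≤ |cos x|) :
    ‖∫ x in a..b, Complex.exp (schrodingerPhase t j x * Complex.I)‖ ≤ 8 * δ := by
  set μ := 2 * |t| * δ
  have hμδ : 1 ≤ μ * δ ^ 2 := by linarith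
  have hμ : 0 < μ := by
    by_contra! h
    nlinarith [mul_nonpos_of_nonpos_of_nonneg h (sq_nonneg δ)]
  have hδμ : 1 ≤ δ * √μ := by
    rw [← sqrt_sq hδ.le, ← sqrt_mul (sq_nonneg δ), one_le_sqrt]
    linarith
  refine (norm_integral_exp_mul_I_le_of_le_abs_deriv2 hab hμ
    (fun x _ => hasDerivAt_schrodingerPhase t j x) (fun x _ => hasDerivAt_sub_mul_sin t j x)
    (by fun_prop) fun x hx => ?_).trans ?_
  · rw [abs_neg, abs_mul, abs_mul, abs_two]
    exact mul_le_mul_of_nonneg_left (hcos x hx) (by positivity)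
  · rw [div_le_iff₀ (sqrt_pos.2 hμ)]
    nlinarith

theorem norm_schrodingerKernel_le_of_one_le_mul_pow {t δ : ℝ} (j : ℤ) (hδ : 0 < δ) (hδ₁ : δ ≤ 1)
    (htδ : 1 ≤ 2 * |t| * δ ^ 3) : ‖schrodingerKernel t j‖ ≤ 5 * δ := by
  -- `|cos| ≥ δ` off the windows of half-width `w` around `±π/2`; on the windows the integrand
  -- is bounded by `1`.
  set w := π / 2 * δ with hw_def
  have hw₀ : 0 ≤ w := by positivity
  have hwπ : w ≤ π / 2 := mul_le_of_le_one_right (by positivity) hδ₁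
  set ψ := schrodingerPhase t j
  have hgood (a b : ℝ) (hab : a ≤ b) (ha : -π ≤ a) (hb : b ≤ π)
      (hsep : b ≤ -(π / 2) - w ∨ (-(π / 2) + w ≤ a ∧ b ≤ π / 2 - w) ∨ π / 2 + w ≤ a) :
      ‖∫ x in a..b, Complex.exp (ψ x * Complex.I)‖ ≤ 8 * δ := by
    refine norm_integral_exp_schrodingerPhase_le j hab hδ htδ fun x ⟨hax, hxb⟩ => ?_
    refine le_abs_cos_of_le_abs_sub_pi_div_two hδ.le hδ₁ (abs_le.2 ⟨by linarith, by linarith⟩)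
      (le_abs.2 ?_) (le_abs.2 ?_)
      <;> rcases hsep with h | ⟨h, h'⟩ | h
      <;> first | (left; linarith) | (right; linarith)
  have hwindow (a : ℝ) : ‖∫ x in (a - w)..(a + w), Complex.exp (ψ x * Complex.I)‖ ≤ 2 * w := by
    refine (norm_integral_exp_mul_I_le ψ _ _).trans_eq ?_
    rw [abs_of_nonneg (by linarith)]
    ring
  have hψ : Continuous ψ :=
    continuous_iff_continuousAt.2 fun ξ => (hasDerivAt_schrodingerPhase t j ξ).continuousAt
  have hi (a b : ℝ) : IntervalIntegrable (fun x => Complex.exp (ψ x * Complex.I)) volume a b :=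
    (by fun_prop : Continuous fun x => Complex.exp (ψ x * Complex.I)).intervalIntegrable a b
  have htot : ‖∫ x in (-π)..π, Complex.exp (ψ x * Complex.I)‖ ≤ 3 * (8 * δ) + 2 * (2 * w) := by
    have hπ := pi_pos
    linarith [norm_intervalIntegral_le_add (hi (-π) (-(π / 2) - w)) (hi _ π),
      norm_intervalIntegral_le_add (hi (-(π / 2) - w) (-(π / 2) + w)) (hi _ π),
      norm_intervalIntegral_le_add (hi (-(π / 2) + w) (π / 2 - w)) (hi _ π),
      norm_intervalIntegral_le_add (hi (π / 2 - w) (π / 2 + w)) (hi _ π),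
      hgood (-π) (-(π / 2) - w) (by linarith) le_rfl (by linarith) (Or.inl le_rfl),
      hwindow (-(π / 2)),
      hgood (-(π / 2) + w) (π / 2 - w) (by linarith) (by linarith) (by linarith)
        (Or.inr (Or.inl ⟨le_rfl, le_rfl⟩)),
      hwindow (π / 2),
      hgood (π / 2 + w) π (by linarith) (by linarith) le_rfl (Or.inr (Or.inr le_rfl))]
  rw [norm_schrodingerKernel]
  calc (2 * π)⁻¹ * ‖∫ x in (-π)..π, Complex.exp (ψ x * Complex.I)‖
      ≤ (2 * π)⁻¹ * (3 * (8 * δ) + 2 * (2 * w)) := by gcongr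
    _ = (12 / π + 1) * δ := by rw [hw_def]; field_simp; ring
    _ ≤ 5 * δ := by
        gcongr
        rw [div_add_one pi_pos.ne', div_le_iff₀ pi_pos]
        linarith [pi_gt_three]

theorem norm_schrodingerKernel_le (t : ℝ) (j : ℤ) :
    ‖schrodingerKernel t j‖ ≤ 5 * (1 + |t|) ^ (-(1 / 3 : ℝ)) := by
  set δ := (1 + |t|) ^ (-(1 / 3 : ℝ))
  have ht : 0 < 1 + |t| := by positivity
  have hδ : 0 < δ := rpow_pos_of_pos ht _
  have hδ3 : δ ^ 3 = (1 + |t|)⁻¹ := by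
    rw [← rpow_natCast, ← rpow_mul ht.le, ← rpow_neg_one]
    norm_num
  rcases le_or_gt 1 |t| with h | h
  · refine norm_schrodingerKernel_le_of_one_le_mul_pow j hδ
      (rpow_le_one_of_one_le_of_nonpos (by linarith) (by norm_num)) ?_
    rw [hδ3, ← div_eq_mul_inv, one_le_div ht]
    linarith
  · have h5 : 1 / 5 < δ := by
      refine lt_of_pow_lt_pow_left₀ 3 hδ.le ?_
      rw [hδ3, lt_inv_comm₀ (by norm_num) ht]
      norm_num
      linarith
    linarith [norm_schrodingerKernel_le_one t j]

theorem norm_tsum_mul_le_of_norm_le {ι R : Type*} [NormedRing R] {g φ : ι → R} {B : ℝ}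
    (hg : ∀ k, ‖g k‖ ≤ B) (hφ : Summable fun k => ‖φ k‖) :
    ‖∑' k, g k * φ k‖ ≤ B * ∑' k, ‖φ k‖ := by
  have hbound (k : ι) : ‖g k * φ k‖ ≤ B * ‖φ k‖ :=
    (norm_mul_le _ _).trans (mul_le_mul_of_nonneg_right (hg k) (norm_nonneg _))
  have hsum : Summable fun k => ‖g k * φ k‖ :=
    (hφ.mul_left B).of_nonneg_of_le (fun _ => norm_nonneg _) hbound
  calc ‖∑' k, g k * φ k‖ ≤ ∑' k, ‖g k * φ k‖ := norm_tsum_le_tsum_norm hsum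
    _ ≤ ∑' k, B * ‖φ k‖ := hsum.tsum_le_tsum hbound (hφ.mul_left B)
    _ = B * ∑' k, ‖φ k‖ := tsum_mul_left

/-- Dispersive decay for the discrete Schrödinger equation on the positive integers with
Dirichlet boundary condition at `j = 0`; the solution is given by odd reflection of the
whole-line kernel. -/
theorem discrete_schrodinger_dirichlet_decay :
    ∃ C > 0, ∀ (t : ℝ) (φ : {k : ℤ // 1 ≤ k} → ℂ),
      Summable (fun k : {k : ℤ // 1 ≤ k} => ‖φ k‖) →
      ∀ j : ℤ, 1 ≤ j →
        ‖∑' k : {k : ℤ // 1 ≤ k},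
            (schrodingerKernel t (j - k.1) - schrodingerKernel t (j + k.1)) * φ k‖ ≤
          C * (1 + |t|) ^ (-(1 / 3 : ℝ)) * ∑' k : {k : ℤ // 1 ≤ k}, ‖φ k‖ := by
  refine ⟨10, by norm_num, fun t φ hφ j _ => ?_⟩
  have hK (k : {k : ℤ // 1 ≤ k}) :
      ‖schrodingerKernel t (j - k.1) - schrodingerKernel t (j + k.1)‖ ≤
        10 * (1 + |t|) ^ (-(1 / 3 : ℝ)) := by
    linarith [norm_sub_le (schrodingerKernel t (j - k.1)) (schrodingerKernel t (j + k.1)),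
      norm_schrodingerKernel_le t (j - k.1), norm_schrodingerKernel_le t (j + k.1)]
  exact norm_tsum_mul_le_of_norm_le hK hφ
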